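/- arXiv:1705.07985 — 6 statements merged into one kernel-verified Lean document; each statement's English description precedes it below -/
import Mathlib

section
/- Validity of directed cut inequalities: let a feasible solution be given by allocation z (z_{ij} = 1 iff node i is allocated to hub j) and route arcs r forming, for each hub, a directed cycle through all nodes allocated to that hub. Then for every subset S ⊆ V and every i ∈ S, the number of arcs leaving S, r(δ⁺(S)) = Σ_{k∈S, l∉S} r_{kl}, satisfies r(δ⁺(S)) ≥ Σ_{j ∈ V∖S} z_{ij}. -/
/-- Validity of directed cut inequalities.  For a feasible integer
solution given by a single allocation `a` (with `z i j = 1` iff `i` is allocated to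
hub `j`) and route arcs `r` forming, for each hub, one directed cycle through all
nodes allocated to that hub (encoded by a permutation `σ` respecting allocation,
single cycle per class): for every `S ⊆ V` and every `i ∈ S`,
`r(δ⁺(S)) ≥ ∑_{j ∉ S} z i j`. -/
theorem stmt_2 {V : Type*} [Fintype V] [DecidableEq V]
    (a : V → V) (σ : Equiv.Perm V) (z r : V → V → ℕ)
    (hz : ∀ i j, z i j = if a i = j then 1 else 0)
    (hr : ∀ k l, r k l = if σ k = l then 1 else 0)
    (hidem : ∀ v, a (a v) = a v)
    (hresp : ∀ v, a (σ v) = a v)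
    (hcycle : ∀ v w, a v = a w → ∃ m : ℕ, σ^[m] v = w) :
    ∀ S : Finset V, ∀ i ∈ S,
      (∑ j ∈ Sᶜ, z i j) ≤ ∑ k ∈ S, ∑ l ∈ Sᶜ, r k l := by
  intro S i hi
  have hlhs : (∑ j ∈ Sᶜ, z i j) = if a i ∈ Sᶜ then 1 else 0 := by
    simp only [hz]
    rw [Finset.sum_ite_eq Sᶜ (a i) (fun _ => 1)]
  rw [hlhs]
  by_cases hai : a i ∈ Sᶜ
  · simp only [hai, if_true]
    -- find m with σ^[m] i ∉ S
    obtain ⟨m, hm⟩ := hcycle i (a i) (hidem i).symm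
    have hex : ∃ n, σ^[n] i ∉ S := ⟨m, by rw [hm]; exact Finset.mem_compl.mp hai⟩
    classical
    set n := Nat.find hex with hn
    have hnspec : σ^[n] i ∉ S := Nat.find_spec hex
    have hn0 : n ≠ 0 := by
      intro h
      apply hnspec
      rw [h]
      simpa using hi
    obtain ⟨p, hp⟩ := Nat.exists_eq_succ_of_ne_zero hn0
    have hkS : σ^[p] i ∈ S := by
      by_contra h
      exact Nat.find_min hex (by omega : p < n) h
    have hout : σ (σ^[p] i) ∉ S := by
      rw [← Function.iterate_succ_apply' σ p i, ← hp]
      exact hnspec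
    calc 1 = r (σ^[p] i) (σ (σ^[p] i)) := by rw [hr]; simp
      _ ≤ ∑ l ∈ Sᶜ, r (σ^[p] i) l :=
          Finset.single_le_sum (fun _ _ => Nat.zero_le _) (Finset.mem_compl.mpr hout)
      _ ≤ ∑ k ∈ S, ∑ l ∈ Sᶜ, r k l :=
          Finset.single_le_sum (f := fun k => ∑ l ∈ Sᶜ, r k l) (fun _ _ => Nat.zero_le _) hkS
  · simp [hai]
end

section
/- Validity of the reverse cut inequalities: under the same setup, for every subset S ⊆ V and every i ∈ S, the number of arcs entering S satisfies r(δ⁻(S)) ≥ Σ_{j ∈ V∖S} z_{ij}. -/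
/-- Validity of the reverse cut inequalities.  For a feasible integer
solution given by a single allocation `a` (with `z i j = 1` iff `i` is allocated to
hub `j`) and route arcs `r` forming, for each hub, one directed cycle through all
nodes allocated to that hub (encoded by a permutation `σ` respecting allocation,
single cycle per class): for every `S ⊆ V` and every `i ∈ S`,
`r(δ⁻(S)) ≥ ∑_{j ∉ S} z i j` (arcs entering `S`). -/
theorem stmt_3 {V : Type*} [Fintype V] [DecidableEq V]
    (a : V → V) (σ : Equiv.Perm V) (z r : V → V → ℕ)
    (hz : ∀ i j, z i j = if a i = j then 1 else 0)
    (hr : ∀ k l, r k l = if σ k = l then 1 else 0)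
    (hidem : ∀ v, a (a v) = a v)
    (hresp : ∀ v, a (σ v) = a v)
    (hcycle : ∀ v w, a v = a w → ∃ m : ℕ, σ^[m] v = w) :
    ∀ S : Finset V, ∀ i ∈ S,
      (∑ j ∈ Sᶜ, z i j) ≤ ∑ k ∈ Sᶜ, ∑ l ∈ S, r k l := by
  intro S i hiS
  have hL : (∑ j ∈ Sᶜ, z i j) = if a i ∈ Sᶜ then 1 else 0 := by
    simp only [hz]
    rw [Finset.sum_ite_eq]
  rw [hL]
  by_cases hai : a i ∈ Sᶜ
  · simp only [hai, if_true]
    -- find entering arc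
    have hsame : a (a i) = a i := hidem i
    obtain ⟨m, hm⟩ := hcycle (a i) i hsame
    have hP : ∃ n : ℕ, σ^[n] (a i) ∈ S := ⟨m, by rw [hm]; exact hiS⟩
    classical
    let n₀ := Nat.find hP
    have hn₀ : σ^[n₀] (a i) ∈ S := Nat.find_spec hP
    have hn₀ne : n₀ ≠ 0 := by
      intro h
      rw [h] at hn₀
      simp at hn₀
      exact (Finset.mem_compl.mp hai) hn₀
    obtain ⟨p, hp⟩ := Nat.exists_eq_succ_of_ne_zero hn₀ne
    set k := σ^[p] (a i) with hk
    have hkS : k ∉ S := Nat.find_min hP (by omega : p < n₀)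
    have hσk : σ k ∈ S := by
      have : σ^[n₀] (a i) = σ (σ^[p] (a i)) := by
        rw [hp, Function.iterate_succ_apply']
      rwa [this] at hn₀
    calc (1 : ℕ) = r k (σ k) := by rw [hr]; simp
      _ ≤ ∑ l ∈ S, r k l := Finset.single_le_sum (fun _ _ => Nat.zero_le _) hσk
      _ ≤ ∑ k' ∈ Sᶜ, ∑ l ∈ S, r k' l :=
          Finset.single_le_sum (f := fun k' => ∑ l ∈ S, r k' l) (fun _ _ => Nat.zero_le _) (Finset.mem_compl.mpr hkS)
  · simp [hai]
end

section
/- Strengthened two-sided cut inequality: for every S ⊂ V, every i ∈ S, and every i' ∈ V∖S, any feasible integer solution satisfies r(δ⁺(S)) ≥ Σ_{j ∈ V∖S} z_{ij} + Σ_{j' ∈ S} z_{i'j'}. That is, if i is allocated to a hub outside S and i' is allocated to a hub inside S, then at least two arcs cross out of S. -/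
lemma iter_alloc {V : Type*} (a : V → V) (σ : Equiv.Perm V)
    (hresp : ∀ v, a (σ v) = a v) : ∀ m v, a (σ^[m] v) = a v := by
  intro m
  induction m with
  | zero => intro v; rfl
  | succ n ih =>
    intro v
    rw [Function.iterate_succ_apply, ih, hresp]

lemma find_cross {V : Type*} [Fintype V] [DecidableEq V]
    (a : V → V) (σ : Equiv.Perm V) (hresp : ∀ v, a (σ v) = a v) (S : Finset V) :
    ∀ m v, v ∈ S → σ^[m] v ∉ S → ∃ k, k ∈ S ∧ σ k ∉ S ∧ a k = a v := by
  intro m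
  induction m with
  | zero => intro v hv h; exact absurd hv h
  | succ n ih =>
    intro v hv h
    by_cases hn : σ^[n] v ∈ S
    · refine ⟨σ^[n] v, hn, ?_, iter_alloc a σ hresp n v⟩
      intro hc
      exact h (by rwa [Function.iterate_succ_apply'])
    · exact ih v hv hn

/-- Strengthened two-sided cut inequality.  For every `S ⊂ V`, every
`i ∈ S` and every `i' ∈ V∖S`, any feasible integer solution satisfies
`r(δ⁺(S)) ≥ ∑_{j ∉ S} z i j + ∑_{j' ∈ S} z i' j'`: if `i` is allocated to a hub
outside `S` and `i'` to a hub inside `S`, at least two arcs cross out of `S`. -/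
theorem stmt_4 {V : Type*} [Fintype V] [DecidableEq V]
    (a : V → V) (σ : Equiv.Perm V) (z r : V → V → ℕ)
    (hz : ∀ i j, z i j = if a i = j then 1 else 0)
    (hr : ∀ k l, r k l = if σ k = l then 1 else 0)
    (hidem : ∀ v, a (a v) = a v)
    (hresp : ∀ v, a (σ v) = a v)
    (hcycle : ∀ v w, a v = a w → ∃ m : ℕ, σ^[m] v = w) :
    ∀ S : Finset V, ∀ i ∈ S, ∀ i' ∈ Sᶜ,
      (∑ j ∈ Sᶜ, z i j) + (∑ j' ∈ S, z i' j') ≤ ∑ k ∈ S, ∑ l ∈ Sᶜ, r k l := by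
  intro S i hi i' hi'
  have hi' : i' ∉ S := Finset.mem_compl.mp hi'
  have hz1 : (∑ j ∈ Sᶜ, z i j) = if a i ∈ Sᶜ then 1 else 0 := by
    simp only [hz]; rw [Finset.sum_ite_eq]
  have hz2 : (∑ j' ∈ S, z i' j') = if a i' ∈ S then 1 else 0 := by
    simp only [hz]; rw [Finset.sum_ite_eq]
  have key : (∑ k ∈ S, ∑ l ∈ Sᶜ, r k l) = ∑ k ∈ S, if σ k ∉ S then 1 else 0 := by
    apply Finset.sum_congr rfl
    intro k _
    simp only [hr]
    rw [Finset.sum_ite_eq]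
    simp [Finset.mem_compl]
  rw [hz1, hz2, key]
  have w1 : a i ∉ S → ∃ k, k ∈ S ∧ σ k ∉ S ∧ a k = a i := by
    intro h
    obtain ⟨m, hm⟩ := hcycle i (a i) (hidem i).symm
    exact find_cross a σ hresp S m i hi (by rwa [hm])
  have w2 : a i' ∈ S → ∃ k, k ∈ S ∧ σ k ∉ S ∧ a k = a i' := by
    intro h
    obtain ⟨m, hm⟩ := hcycle (a i') i' (hidem i')
    obtain ⟨k, hk1, hk2, hk3⟩ := find_cross a σ hresp S m (a i') h (by rwa [hm])
    exact ⟨k, hk1, hk2, hk3.trans (hidem i')⟩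
  by_cases h1 : a i ∈ S <;> by_cases h2 : a i' ∈ S
  · -- LHS = 0 + 1, one crossing from i''s class
    obtain ⟨k, hk1, hk2, _⟩ := w2 h2
    rw [if_neg (by simp [h1]), if_pos h2]
    calc (0 : ℕ) + 1 ≤ ∑ x ∈ {k}, if σ x ∉ S then 1 else 0 := by simp [hk2]
      _ ≤ _ := Finset.sum_le_sum_of_subset (by simpa using hk1)
  · -- LHS = 0
    rw [if_neg (by simp [h1]), if_neg h2]
    exact Nat.zero_le _
  · -- LHS = 1 + 1, two crossings in distinct classes
    obtain ⟨k₁, ha1, hb1, hc1⟩ := w1 h1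
    obtain ⟨k₂, ha2, hb2, hc2⟩ := w2 h2
    have hne : k₁ ≠ k₂ := by
      intro he
      exact h1 (by rw [← hc1, he, hc2]; exact h2)
    rw [if_pos (Finset.mem_compl.mpr h1), if_pos h2]
    calc (1 : ℕ) + 1 ≤ ∑ x ∈ ({k₁, k₂} : Finset V), if σ x ∉ S then 1 else 0 := by
          rw [Finset.sum_pair hne]; simp [hb1, hb2]
      _ ≤ _ := Finset.sum_le_sum_of_subset (by
          intro x hx
          rcases Finset.mem_insert.mp hx with h | h
          · exact h ▸ ha1
          · exact (Finset.mem_singleton.mp h) ▸ ha2)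
  · -- LHS = 1 + 0, one crossing from i's class
    obtain ⟨k, hk1, hk2, _⟩ := w1 h1
    rw [if_pos (Finset.mem_compl.mpr h1), if_neg h2]
    calc (1 : ℕ) + 0 ≤ ∑ x ∈ {k}, if σ x ∉ S then 1 else 0 := by simp [hk2]
      _ ≤ _ := Finset.sum_le_sum_of_subset (by simpa using hk1)
end

section
/- Hub-forcing inequality: in any feasible integer solution, for all nodes i, j, k with j ≠ i, the inequality r_{ij} + r_{ji} + z_{jk} ≤ 1 + z_{ik} holds; i.e., if there is a route arc between i and j (in either direction) and j is allocated to hub k, then i is allocated to hub k as well. -/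
/-- Hub-forcing inequality.  In any feasible integer solution (cycles of
length at least 3, so `r i j + r j i ≤ 1`), for all nodes `i, j, k` with `j ≠ i`:
`r i j + r j i + z j k ≤ 1 + z i k`; i.e. if a route arc joins `i` and `j` (in either
direction) and `j` is allocated to hub `k`, then `i` is allocated to hub `k` too. -/
theorem stmt_5 {V : Type*} [Fintype V] [DecidableEq V]
    (a : V → V) (σ : Equiv.Perm V) (z r : V → V → ℕ)
    (hz : ∀ i j, z i j = if a i = j then 1 else 0)
    (hr : ∀ k l, r k l = if σ k = l then 1 else 0)
    (hidem : ∀ v, a (a v) = a v)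
    (hresp : ∀ v, a (σ v) = a v)
    (hlen : ∀ v, σ v ≠ v ∧ σ (σ v) ≠ v)
    (hcycle : ∀ v w, a v = a w → ∃ m : ℕ, σ^[m] v = w) :
    ∀ i j k : V, j ≠ i → r i j + r j i + z j k ≤ 1 + z i k := by
  intro i j k _
  rw [hz, hz, hr, hr]
  by_cases h1 : σ i = j
  · have haij : a i = a j := by rw [← h1, hresp]
    have h2 : σ j ≠ i := by
      intro h; exact (hlen i).2 (by rw [h1, h])
    simp only [h1, if_pos rfl, if_neg h2, haij]
    split <;> omega
  · by_cases h2 : σ j = i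
    · have haij : a j = a i := by rw [← h2, hresp]
      simp only [if_neg h1, h2, if_pos rfl, haij]
      split <;> omega
    · simp only [if_neg h1, if_neg h2]
      split <;> split <;> omega
end

section
/- Subtour-type inequality with hub counting: for every subset S ⊆ V, any feasible integer solution satisfies r(A(S)) − Σ_{i∈S} z_{ii} ≤ |S| − ⌈|S|/U⌉, where r(A(S)) is the number of route arcs with both endpoints in S, z_{ii} indicates node i is a hub, and U is an upper bound on the number of nodes in any cycle. -/
/-- Subtour-type inequality with hub counting.  In a feasible integer
solution whose route arcs form vertex-disjoint directed cycles, one per hub, each of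
length at most `U` (each allocation class has at most `U` nodes), for every `S ⊆ V`:
`r(A(S)) − ∑_{i∈S} z i i ≤ |S| − ⌈|S|/U⌉`, stated additively in `ℕ` as
`r(A(S)) + ⌈|S|/U⌉ ≤ |S| + ∑_{i∈S} z i i`, where `⌈n/U⌉ = (n + U - 1)/U`. -/
theorem stmt_6 {V : Type*} [Fintype V] [DecidableEq V]
    (a : V → V) (σ : Equiv.Perm V) (z r : V → V → ℕ) (U : ℕ)
    (hz : ∀ i j, z i j = if a i = j then 1 else 0)
    (hr : ∀ k l, r k l = if σ k = l then 1 else 0)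
    (hidem : ∀ v, a (a v) = a v)
    (hresp : ∀ v, a (σ v) = a v)
    (hcycle : ∀ v w, a v = a w → ∃ m : ℕ, σ^[m] v = w)
    (hU1 : 1 ≤ U)
    (hU : ∀ k, a k = k → (Finset.univ.filter (fun v => a v = k)).card ≤ U) :
    ∀ S : Finset V,
      (∑ p ∈ S ×ˢ S, r p.1 p.2) + (S.card + U - 1) / U ≤
        S.card + ∑ i ∈ S, z i i := by
  classical
  intro S
  set F := S.filter (fun k => σ k ∈ S) with hF
  set H := S.image a with hH
  -- a h = h for h ∈ H
  have hhub : ∀ h ∈ H, a h = h := by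
    intro h hh
    rw [hH] at hh
    obtain ⟨x, _, rfl⟩ := Finset.mem_image.mp hh
    exact hidem x
  -- Step 1: the arc sum equals the number of k ∈ S with σ k ∈ S.
  have h1 : (∑ p ∈ S ×ˢ S, r p.1 p.2) = F.card := by
    rw [Finset.sum_product]
    calc ∑ k ∈ S, ∑ l ∈ S, r k l
        = ∑ k ∈ S, (if σ k ∈ S then 1 else 0) := by
          refine Finset.sum_congr rfl fun k _ => ?_
          simp [hr, Finset.sum_ite_eq]
      _ = F.card := by rw [hF, Finset.card_filter]
  have hSa : ∀ x ∈ S, a x ∈ H := fun x hx => Finset.mem_image_of_mem a hx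
  have hFa : ∀ x ∈ F, a x ∈ H := fun x hx =>
    Finset.mem_image_of_mem a (Finset.mem_filter.mp hx).1
  have hScard : S.card = ∑ h ∈ H, (S.filter (fun x => a x = h)).card :=
    Finset.card_eq_sum_card_fiberwise hSa
  have hFcard : F.card = ∑ h ∈ H, (F.filter (fun x => a x = h)).card :=
    Finset.card_eq_sum_card_fiberwise hFa
  -- the key per-class inequality
  have hkey : ∀ h ∈ H, (F.filter (fun x => a x = h)).card + 1 ≤
      (S.filter (fun x => a x = h)).card +
        (if (Finset.univ.filter (fun v => a v = h)) ⊆ S then 1 else 0) := by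
    intro h hh
    have hsubF : F.filter (fun x => a x = h) ⊆ S.filter (fun x => a x = h) :=
      Finset.filter_subset_filter _ (Finset.filter_subset _ S)
    by_cases hsub : (Finset.univ.filter (fun v => a v = h)) ⊆ S
    · rw [if_pos hsub]
      exact Nat.add_le_add_right (Finset.card_le_card hsubF) 1
    · rw [if_neg hsub]
      -- there is a witness class element outside S
      obtain ⟨w, hwmem, hwS⟩ := Finset.not_subset.mp hsub
      have hwa : a w = h := (Finset.mem_filter.mp hwmem).2
      -- there is v ∈ S with a v = h
      rw [hH] at hh
      obtain ⟨v, hvS, hva⟩ := Finset.mem_image.mp hh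
      -- find k ∈ S with a k = h and σ k ∉ S
      have hex : ∃ k, k ∈ S ∧ a k = h ∧ σ k ∉ S := by
        by_contra hcon
        push_neg at hcon
        have hstep : ∀ m : ℕ, σ^[m] v ∈ S ∧ a (σ^[m] v) = h := by
          intro m
          induction m with
          | zero => exact ⟨hvS, hva⟩
          | succ n ih =>
            rw [Function.iterate_succ_apply']
            exact ⟨hcon _ ih.1 ih.2, (hresp _).trans ih.2⟩
        obtain ⟨m, hm⟩ := hcycle v w (hva.trans hwa.symm)
        exact hwS (hm ▸ (hstep m).1)
      obtain ⟨k, hkS, hka, hkσ⟩ := hex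
      have hk1 : k ∈ S.filter (fun x => a x = h) := Finset.mem_filter.mpr ⟨hkS, hka⟩
      have hk2 : k ∉ F.filter (fun x => a x = h) := by
        intro hkF
        exact hkσ (Finset.mem_filter.mp (Finset.mem_filter.mp hkF).1).2
      have : (F.filter (fun x => a x = h)).card < (S.filter (fun x => a x = h)).card :=
        Finset.card_lt_card ((Finset.ssubset_iff_of_subset hsubF).mpr ⟨k, hk1, hk2⟩)
      omega
  have hsum : F.card + H.card ≤
      S.card + ∑ h ∈ H, (if (Finset.univ.filter (fun v => a v = h)) ⊆ S then 1 else 0) := by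
    rw [hFcard, hScard]
    have : (H.card : ℕ) = ∑ _h ∈ H, 1 := by simp
    rw [this, ← Finset.sum_add_distrib, ← Finset.sum_add_distrib]
    exact Finset.sum_le_sum hkey
  -- hub counting
  have hzz : ∑ h ∈ H, (if (Finset.univ.filter (fun v => a v = h)) ⊆ S then 1 else 0) ≤
      ∑ i ∈ S, z i i := by
    have h2 : ∑ i ∈ S, z i i = (S.filter (fun i => a i = i)).card := by
      rw [Finset.card_filter]
      exact Finset.sum_congr rfl fun i _ => hz i i
    have h3 : ∑ h ∈ H, (if (Finset.univ.filter (fun v => a v = h)) ⊆ S then 1 else 0)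
        = (H.filter (fun h => (Finset.univ.filter (fun v => a v = h)) ⊆ S)).card := by
      rw [Finset.card_filter]
    rw [h2, h3]
    refine Finset.card_le_card fun h hmem => ?_
    obtain ⟨hhH, hhsub⟩ := Finset.mem_filter.mp hmem
    have hah : a h = h := hhub h hhH
    have hhS : h ∈ S := hhsub (Finset.mem_filter.mpr ⟨Finset.mem_univ h, hah⟩)
    exact Finset.mem_filter.mpr ⟨hhS, hah⟩
  -- ceiling bound
  have hceil : (S.card + U - 1) / U ≤ H.card := by
    have hb : S.card ≤ U * H.card := by
      rw [hScard]
      calc ∑ h ∈ H, (S.filter (fun x => a x = h)).card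
          ≤ ∑ _h ∈ H, U := by
            refine Finset.sum_le_sum fun h hh => ?_
            exact le_trans (Finset.card_le_card
              (fun x hx => Finset.mem_filter.mpr
                ⟨Finset.mem_univ x, (Finset.mem_filter.mp hx).2⟩)) (hU h (hhub h hh))
        _ = U * H.card := by rw [Finset.sum_const, smul_eq_mul, mul_comm]
    have hUpos : 0 < U := hU1
    have h4 : S.card + U - 1 < (H.card + 1) * U := by
      have h5 : (H.card + 1) * U = U * H.card + U := by ring
      omega
    have h6 : (S.card + U - 1) / U < H.card + 1 :=
      (Nat.div_lt_iff_lt_mul hUpos).mpr h4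
    omega
  rw [h1]
  calc F.card + (S.card + U - 1) / U
      ≤ F.card + H.card := Nat.add_le_add_left hceil _
    _ ≤ S.card + _ := hsum
    _ ≤ S.card + ∑ i ∈ S, z i i := Nat.add_le_add_left hzz _
end

section
/- Cut lower bound from cycle-length cap: for every S ⊆ V, any feasible integer solution with all cycles of length at most U satisfies U·r(δ⁺(S)) ≥ Σ_{i∈S} Σ_{j∈V} z_{ij} + r(δ⁺(S)) − U·Σ_{i∈S} z_{ii}, equivalently r(δ⁺(S)) ≥ (|S| + r(δ⁺(S)))/U − Σ_{i∈S} z_{ii} (using Σ_j z_{ij} = 1 for each i). -/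
/-- Per-fiber key inequality. -/
theorem stmt_8_key {V : Type*} [Fintype V] [DecidableEq V]
    (a : V → V) (σ : Equiv.Perm V)
    (hidem : ∀ v, a (a v) = a v)
    (hresp : ∀ v, a (σ v) = a v)
    (hcycle : ∀ v w, a v = a w → ∃ m : ℕ, σ^[m] v = w)
    (U : ℕ) (hU1 : 1 ≤ U)
    (hU : ∀ k, a k = k → (Finset.univ.filter (fun v => a v = k)).card ≤ U)
    (S : Finset V) (h : V) :
    (∑ k ∈ S.filter (fun k => a k = h), 1)
      + (∑ k ∈ S.filter (fun k => a k = h), if σ k ∉ S then 1 else 0)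
    ≤ U * (∑ k ∈ S.filter (fun k => a k = h), if σ k ∉ S then 1 else 0)
      + U * (∑ k ∈ S.filter (fun k => a k = h), if a k = k then 1 else 0) := by
  classical
  set T : Finset V := S.filter (fun k => a k = h) with hT
  have hsum1 : (∑ k ∈ T, (1 : ℕ)) = T.card := by simp
  have hsumc : (∑ k ∈ T, if σ k ∉ S then 1 else 0)
      = (T.filter (fun k => σ k ∉ S)).card := by
    rw [Finset.card_filter]
  have hsumh : (∑ k ∈ T, if a k = k then 1 else 0)
      = (T.filter (fun k => a k = k)).card := by
    rw [Finset.card_filter]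
  rw [hsum1, hsumc, hsumh]
  rcases T.eq_empty_or_nonempty with hE | ⟨v, hv⟩
  · simp [hE]
  have hvS : v ∈ S := (Finset.mem_filter.mp hv).1
  have hva : a v = h := (Finset.mem_filter.mp hv).2
  have hhub : a h = h := by rw [← hva, hidem]
  set C : Finset V := Finset.univ.filter (fun w => a w = h) with hC
  have hTC : T ⊆ C := by
    intro x hx
    exact Finset.mem_filter.mpr ⟨Finset.mem_univ x, (Finset.mem_filter.mp hx).2⟩
  have hCU : C.card ≤ U := hU h hhub
  rcases Nat.eq_zero_or_pos (T.filter (fun k => σ k ∉ S)).card with hc0 | hcpos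
  · -- no cut arcs: T is σ-invariant, hence T = C, hub in T
    have hcutE : (T.filter (fun k => σ k ∉ S)) = ∅ := Finset.card_eq_zero.mp hc0
    have hinv : ∀ k ∈ T, σ k ∈ T := by
      intro k hk
      have hkS : k ∈ S := (Finset.mem_filter.mp hk).1
      have hka : a k = h := (Finset.mem_filter.mp hk).2
      have hσS : σ k ∈ S := by
        by_contra hσ
        have : k ∈ T.filter (fun k => σ k ∉ S) := Finset.mem_filter.mpr ⟨hk, hσ⟩
        simp [hcutE] at this
      exact Finset.mem_filter.mpr ⟨hσS, by rw [hresp, hka]⟩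
    have hiter : ∀ m : ℕ, σ^[m] v ∈ T := by
      intro m
      induction m with
      | zero => simpa using hv
      | succ n ih => rw [Function.iterate_succ_apply']; exact hinv _ ih
    have hCT : C ⊆ T := by
      intro w hw
      have hwa : a w = h := (Finset.mem_filter.mp hw).2
      obtain ⟨m, hm⟩ := hcycle v w (by rw [hva, hwa])
      rw [← hm]; exact hiter m
    have hTCeq : T = C := Finset.Subset.antisymm hTC hCT
    have hhT : h ∈ T := hCT (Finset.mem_filter.mpr ⟨Finset.mem_univ h, hhub⟩)
    have hhfil : h ∈ T.filter (fun k => a k = k) := Finset.mem_filter.mpr ⟨hhT, hhub⟩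
    have h1 : 1 ≤ (T.filter (fun k => a k = k)).card :=
      Finset.card_pos.mpr ⟨h, hhfil⟩
    calc T.card + (T.filter (fun k => σ k ∉ S)).card
        = T.card := by rw [hc0, Nat.add_zero]
      _ ≤ U := hTCeq ▸ hCU
      _ = U * 1 := (mul_one U).symm
      _ ≤ U * (T.filter (fun k => a k = k)).card := Nat.mul_le_mul_left U h1
      _ ≤ _ := Nat.le_add_left _ _
  · -- at least one cut arc: T ⊊ C so |T| + 1 ≤ U
    obtain ⟨k, hk⟩ := Finset.card_pos.mp hcpos
    have hkT : k ∈ T := (Finset.mem_filter.mp hk).1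
    have hkσ : σ k ∉ S := (Finset.mem_filter.mp hk).2
    have hka : a k = h := (Finset.mem_filter.mp hkT).2
    have hσC : σ k ∈ C :=
      Finset.mem_filter.mpr ⟨Finset.mem_univ _, by rw [hresp, hka]⟩
    have hσT : σ k ∉ T := fun hmem => hkσ (Finset.mem_filter.mp hmem).1
    have hssub : T ⊂ C := Finset.ssubset_iff_of_subset hTC |>.mpr ⟨σ k, hσC, hσT⟩
    have hTlt : T.card + 1 ≤ U := le_trans (Finset.card_lt_card hssub) hCU
    set c := (T.filter (fun k => σ k ∉ S)).card with hc
    calc T.card + c ≤ T.card * c + c := by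
          have := Nat.le_mul_of_pos_right T.card hcpos
          omega
      _ = (T.card + 1) * c := by ring
      _ ≤ U * c := Nat.mul_le_mul_right c hTlt
      _ ≤ _ := Nat.le_add_right _ _

/-- Cut lower bound from cycle-length cap.  In a feasible integer
solution whose cycles all have length at most `U` (each allocation class has at most
`U` nodes) and each cycle contains exactly one hub, for every `S ⊆ V`:
`U·r(δ⁺(S)) ≥ ∑_{i∈S} ∑_{j∈V} z i j + r(δ⁺(S)) − U·∑_{i∈S} z i i`, stated
additively in `ℕ`. -/
theorem stmt_8 {V : Type*} [Fintype V] [DecidableEq V]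
    (a : V → V) (σ : Equiv.Perm V) (z r : V → V → ℕ) (U : ℕ)
    (hz : ∀ i j, z i j = if a i = j then 1 else 0)
    (hr : ∀ k l, r k l = if σ k = l then 1 else 0)
    (hidem : ∀ v, a (a v) = a v)
    (hresp : ∀ v, a (σ v) = a v)
    (hcycle : ∀ v w, a v = a w → ∃ m : ℕ, σ^[m] v = w)
    (hU1 : 1 ≤ U)
    (hU : ∀ k, a k = k → (Finset.univ.filter (fun v => a v = k)).card ≤ U) :
    ∀ S : Finset V,
      (∑ i ∈ S, ∑ j, z i j) + (∑ k ∈ S, ∑ l ∈ Sᶜ, r k l) ≤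
        U * (∑ k ∈ S, ∑ l ∈ Sᶜ, r k l) + U * ∑ i ∈ S, z i i := by
  intro S
  have e1 : ∀ i, (∑ j, z i j) = 1 := by
    intro i; simp [hz]
  have e2 : ∀ k, (∑ l ∈ Sᶜ, r k l) = if σ k ∉ S then 1 else 0 := by
    intro k
    simp only [hr, Finset.sum_ite_eq, Finset.mem_compl]
  have e3 : ∀ i, z i i = if a i = i then 1 else 0 := fun i => hz i i
  simp only [e1, e2, e3]
  have fib : ∀ f : V → ℕ, (∑ k ∈ S, f k)
      = ∑ h : V, ∑ k ∈ S.filter (fun k => a k = h), f k := by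
    intro f
    exact (Finset.sum_fiberwise_of_maps_to (fun x _ => Finset.mem_univ (a x)) f).symm
  rw [fib (fun _ => 1), fib (fun k => if σ k ∉ S then 1 else 0),
    fib (fun i => if a i = i then 1 else 0), Finset.mul_sum, Finset.mul_sum,
    ← Finset.sum_add_distrib, ← Finset.sum_add_distrib]
  exact Finset.sum_le_sum fun h _ =>
    stmt_8_key a σ hidem hresp hcycle U hU1 hU S h
end
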